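/- arXiv:1803.10880 — 3 statements merged into one kernel-verified Lean document; each statement's English description precedes it below -/
import Mathlib

section
/- Let m be an odd integer ≥ 3 and q > 0. Define T₁, T₂ ∈ M₂(ℂ) by T₁ = (1/q)[[-1,0],[c,q]] and T₂ = (1/q)[[q,c'],[0,-1]], where c c' = 4q cos²(πj/m) for some integer 1 ≤ j ≤ (m-1)/2 with c, c' nonzero. Then T₁² = q^{-1}I + (1 - q^{-1})T₁, T₂² = q^{-1}I + (1 - q^{-1})T₂, and the alternating products (T₁T₂T₁⋯) and (T₂T₁T₂⋯) of length m are equal. Hence this defines a 2-dimensional representation of the Hecke algebra of type I₂(m). -/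
open Real Matrix

set_option maxHeartbeats 1000000

theorem altprod {M : Type*} [Monoid M] (X Y : M) (k : ℕ) :
    ((List.range (2*k+1)).map (fun i => if Even i then X else Y)).prod = (X*Y)^k * X := by
  induction k with
  | zero => simp [List.range_succ]
  | succ k ih =>
    have h : 2*(k+1)+1 = (2*k+1) + 1 + 1 := by ring
    rw [h, List.range_succ, List.range_succ, List.map_append, List.map_append,
      List.prod_append, List.prod_append, ih]
    have h1 : ¬ Even (2*k+1) := by simp [Nat.even_add_one]
    have h2 : Even (2*k+1+1) := by refine ⟨k+1, by ring⟩
    simp only [List.map_cons, List.map_nil, List.prod_cons, List.prod_nil, h1, h2,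
      if_true, if_false]
    rw [pow_succ]
    simp [mul_assoc]

/-- The matrices `T₁ = q⁻¹[[-1,0],[c,q]]`, `T₂ = q⁻¹[[q,c'],[0,-1]]` with
`c c' = 4q cos²(πj/m)` satisfy the quadratic Hecke relations and the length-`m` braid
relation, hence define a 2-dimensional representation of the Hecke algebra of type `I₂(m)`. -/
theorem stmt10 (m : ℕ) (hm : 3 ≤ m) (hodd : Odd m) (q : ℝ) (hq : 0 < q)
    (j : ℕ) (hj1 : 1 ≤ j) (hj2 : j ≤ (m - 1) / 2)
    (c c' : ℂ) (hc : c ≠ 0) (hc' : c' ≠ 0)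
    (hcc : c * c' = ((4 * q * Real.cos (π * j / m) ^ 2 : ℝ) : ℂ))
    (T₁ T₂ : Matrix (Fin 2) (Fin 2) ℂ)
    (hT₁ : T₁ = (q : ℂ)⁻¹ • !![-1, 0; c, (q : ℂ)])
    (hT₂ : T₂ = (q : ℂ)⁻¹ • !![(q : ℂ), c'; 0, -1]) :
    T₁ ^ 2 = (q : ℂ)⁻¹ • (1 : Matrix (Fin 2) (Fin 2) ℂ) + (1 - (q : ℂ)⁻¹) • T₁ ∧
    T₂ ^ 2 = (q : ℂ)⁻¹ • (1 : Matrix (Fin 2) (Fin 2) ℂ) + (1 - (q : ℂ)⁻¹) • T₂ ∧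
    ((List.range m).map (fun k => if Even k then T₁ else T₂)).prod =
      ((List.range m).map (fun k => if Even k then T₂ else T₁)).prod := by
  have hq0 : (q : ℂ) ≠ 0 := Complex.ofReal_ne_zero.mpr hq.ne'
  refine ⟨?_, ?_, ?_⟩
  · subst hT₁
    ext i j
    fin_cases i <;> fin_cases j
    all_goals simp [pow_two, Matrix.mul_apply, Fin.sum_univ_two, Matrix.one_apply]
    all_goals try field_simp
    all_goals try ring
  · subst hT₂
    ext i j
    fin_cases i <;> fin_cases j
    all_goals simp [pow_two, Matrix.mul_apply, Fin.sum_univ_two, Matrix.one_apply]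
    all_goals try field_simp
    all_goals try ring
  · -- braid relation
    obtain ⟨l, hl⟩ := hodd
    obtain ⟨k, hk⟩ : ∃ k, m = 2*k+3 := ⟨l - 1, by omega⟩
    subst hk
    have hjk : j ≤ k + 1 := by omega
    set θ : ℝ := π * j / (2*k+3 : ℕ) with hθdef
    have hm0 : (0:ℝ) < ((2*k+3 : ℕ):ℝ) := by positivity
    have hmne : ((2*k+3 : ℕ):ℝ) ≠ 0 := hm0.ne'
    have hθpos : 0 < θ := by
      apply div_pos (mul_pos pi_pos _) hm0
      exact_mod_cast Nat.pos_of_ne_zero (by omega)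
    have hmθ : ((2*k+3 : ℕ):ℝ) * θ = (j:ℝ) * π := by
      rw [hθdef]
      field_simp
    have hjm : 2*(j:ℝ) < ((2*k+3 : ℕ):ℝ) := by exact_mod_cast (by omega : 2*j < 2*k+3)
    have h2θlt : 2*θ < π := by
      have h := mul_lt_mul_of_pos_left hjm pi_pos
      have : 2*θ * ((2*k+3:ℕ):ℝ) < π * ((2*k+3:ℕ):ℝ) := by nlinarith [hmθ]
      exact lt_of_mul_lt_mul_right this hm0.le
    have hs : 0 < Real.sin (2*θ) := Real.sin_pos_of_pos_of_lt_pi (by linarith) h2θlt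
    have hsne : Real.sin (2*θ) ≠ 0 := hs.ne'
    -- the sequence u n = sin(2nθ)/sin(2θ)
    set v : ℕ → ℝ := fun n => Real.sin (2*n*θ) / Real.sin (2*θ) with hvdef
    have hv0 : v 0 = 0 := by simp [hvdef]
    have hv1 : v 1 = 1 := by simp [hvdef, div_self hsne]
    have key : ∀ x : ℝ, Real.sin (x + 2*θ) =
        (4*Real.cos θ^2 - 2)*Real.sin x - Real.sin (x - 2*θ) := by
      intro x
      rw [Real.sin_add, Real.sin_sub, Real.cos_two_mul]
      ring
    have hvrec : ∀ n : ℕ, v (n+2) = (4*Real.cos θ^2 - 2) * v (n+1) - v n := by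
      intro n
      have h1 : 2*((n:ℝ)+2)*θ = (2*((n:ℝ)+1)*θ) + 2*θ := by ring
      have h2 : 2*(n:ℝ)*θ = (2*((n:ℝ)+1)*θ) - 2*θ := by ring
      simp only [hvdef]
      push_cast
      rw [h1, h2, key]
      ring
    set u : ℕ → ℂ := fun n => ((v n : ℝ) : ℂ) with hudef
    have hu0 : u 0 = 0 := by simp [hudef, hv0]
    have hu1 : u 1 = 1 := by simp [hudef, hv1]
    set t : ℂ := ((4*Real.cos θ^2 - 2 : ℝ) : ℂ) with htdef
    have hurec : ∀ n : ℕ, u (n+2) = t * u (n+1) - u n := by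
      intro n
      simp only [hudef, htdef, ← Complex.ofReal_mul, ← Complex.ofReal_sub]
      exact_mod_cast congrArg (Complex.ofReal) (hvrec n)
    -- express c' via c
    have hc'eq : c' = ((4*q*Real.cos θ^2 : ℝ) : ℂ) / c := by
      rw [eq_div_iff hc]
      rw [hθdef] at *
      linear_combination hcc
    obtain ⟨B, hBdef⟩ : ∃ B : Matrix (Fin 2) (Fin 2) ℂ, B = (q:ℂ) • (T₁ * T₂) := ⟨_, rfl⟩
    have hTT : T₁ * T₂ = (q:ℂ)⁻¹ • B := by
      rw [hBdef, smul_smul, inv_mul_cancel₀ hq0, one_smul]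
    have hB2 : B * B = t • B - 1 := by
      rw [hBdef, hT₁, hT₂, hc'eq, htdef]
      ext i j
      fin_cases i <;> fin_cases j
      all_goals simp [Matrix.mul_apply, Fin.sum_univ_two, Matrix.one_apply]
      all_goals field_simp
      all_goals try ring_nf
      all_goals try field_simp
      all_goals try ring
    have hBpow : ∀ n, B^(n+1) = u (n+1) • B - u n • 1 := by
      intro n
      induction n with
      | zero => simp [hu0, hu1]
      | succ n ih =>
        have h2 : u (n+1+1) = t * u (n+1) - u n := hurec n
        rw [pow_succ, ih, Matrix.sub_mul, smul_mul_assoc, smul_mul_assoc, one_mul,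
          hB2, smul_sub, smul_smul, h2, sub_smul, mul_comm t]
        abel
    have hX : B*T₁ - T₂*B = ((4*Real.cos θ^2 - 1 : ℝ) : ℂ) • (T₁ - T₂) := by
      rw [hBdef, hT₁, hT₂, hc'eq]
      ext i j
      fin_cases i <;> fin_cases j
      all_goals simp [Matrix.mul_apply, Fin.sum_univ_two]
      all_goals field_simp
      all_goals try ring_nf
      all_goals try field_simp
      all_goals try ring
    -- key trigonometric identity
    have hnum : Real.sin (2*((k:ℝ)+1)*θ) * (4*Real.cos θ^2 - 1) = Real.sin (2*(k:ℝ)*θ) := by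
      have h1 : 2*((k:ℝ)+1)*θ = (j:ℝ)*π - θ := by push_cast at hmθ ⊢; linarith
      have h2 : 2*(k:ℝ)*θ = (j:ℝ)*π - 3*θ := by push_cast at hmθ ⊢; linarith
      rw [h1, h2, Real.sin_nat_mul_pi_sub θ j, Real.sin_nat_mul_pi_sub (3*θ) j,
        Real.sin_three_mul]
      have hsc := Real.sin_sq_add_cos_sq θ
      linear_combination (-4*Real.sin θ*((-1:ℝ)^j)) * hsc
    have hvkey : v (k+1) * (4*Real.cos θ^2 - 1) = v k := by
      simp only [hvdef]
      rw [div_mul_eq_mul_div]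
      push_cast
      rw [hnum]
    have hkey : u (k+1) * ((4*Real.cos θ^2 - 1 : ℝ) : ℂ) = u k := by
      simp only [hudef, ← Complex.ofReal_mul]
      exact_mod_cast congrArg (Complex.ofReal) hvkey
    -- core matrix identity
    have hcore : B^(k+1) * T₁ = T₂ * B^(k+1) := by
      rw [hBpow k]
      simp only [Matrix.sub_mul, Matrix.mul_sub, smul_mul_assoc, mul_smul_comm,
        one_mul, mul_one]
      rw [sub_eq_sub_iff_sub_eq_sub, ← smul_sub, ← smul_sub, hX, smul_smul, hkey]
    -- assemble
    have hrange : 2*k+3 = 2*(k+1)+1 := by ring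
    rw [hrange, altprod T₁ T₂ (k+1), altprod T₂ T₁ (k+1)]
    have hsemi : T₂ * (T₁*T₂)^(k+1) = (T₂*T₁)^(k+1) * T₂ :=
      (SemiconjBy.pow_right (by rw [SemiconjBy, mul_assoc]) (k+1))
    rw [← hsemi, hTT, smul_pow, smul_mul_assoc, mul_smul_comm, hcore]
end

section
/- In a finite thick generalised m-gon with m odd, the two thickness parameters are equal: if every vertex of one bipartition class has valency q+1 and every vertex of the other class has valency r+1, then q = r. -/
/-!
Take vertices `x`, `y` at distance `m = diam G`. In a bipartite graph every neighbour `z` of `x`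
is then strictly closer to `y`, so a geodesic from `z` to `y` ends through a neighbour `t` of `y`
at distance `m - 2` from `z`. If two neighbours of `x` were sent to the same `t`, we would get two
distinct paths of length `m - 1` from `x` to `t`, hence a cycle shorter than the girth `2m`.
Thus `deg x ≤ deg y`, and equality holds by symmetry; since `m` is odd, `x` and `y` lie in
different classes.
-/

namespace SimpleGraph

variable {V : Type*} {G : SimpleGraph V} {u v x y z z' t : V}

theorem Walk.IsPath.eq_of_length_add_lt_egirth {p q : G.Walk u v} (hp : p.IsPath)
    (hq : q.IsPath) (h : ((p.length + q.length : ℕ) : ℕ∞) < G.egirth) : p = q := by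
  by_contra hne
  obtain ⟨_, -, -, c, hc, hlen⟩ := hp.exists_isCycle_length_le_add_of_ne hq hne
  exact (egirth_le_length hc).not_gt (h.trans_le' (by exact_mod_cast hlen))

theorem Reachable.exists_adj_dist_add_one_eq (h : G.Reachable u v) (hne : u ≠ v) :
    ∃ t, G.Adj t v ∧ G.dist u t + 1 = G.dist u v := by
  obtain ⟨p, hp⟩ := h.exists_walk_length_eq_dist
  have hnil : ¬ p.Nil := fun hn => hne hn.eq
  have hadj := p.adj_penultimate hnil
  refine ⟨p.penultimate, hadj, le_antisymm ?_ ?_⟩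
  · have := dist_le p.dropLast
    have := p.length_dropLast_add_one hnil
    omega
  · simpa [dist_eq_one_iff_adj.mpr hadj] using hadj.reachable.dist_triangle_right u

theorem Adj.exists_walk_snd_eq_of_dist_lt (hz : G.Adj x z) (hzt : G.dist z t < G.dist x t) :
    ∃ p : G.Walk x t, p.snd = z ∧ p.length = G.dist x t := by
  have hreach : G.Reachable z t := hz.symm.reachable.trans (Reachable.of_dist_ne_zero (by omega))
  obtain ⟨w, hw⟩ := hreach.exists_walk_length_eq_dist
  refine ⟨.cons hz w, by simp, le_antisymm ?_ (dist_le _)⟩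
  have := hz.reachable.dist_triangle_left t
  simp only [dist_eq_one_iff_adj.mpr hz, Walk.length_cons] at this ⊢
  omega

theorem Adj.eq_of_dist_lt_of_two_mul_dist_lt_egirth (hz : G.Adj x z) (hz' : G.Adj x z')
    (hzt : G.dist z t < G.dist x t) (hz't : G.dist z' t < G.dist x t)
    (hg : ((2 * G.dist x t : ℕ) : ℕ∞) < G.egirth) : z = z' := by
  obtain ⟨p, rfl, hp⟩ := hz.exists_walk_snd_eq_of_dist_lt hzt
  obtain ⟨q, rfl, hq⟩ := hz'.exists_walk_snd_eq_of_dist_lt hz't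
  have hpq : p = q := (p.isPath_of_length_eq_dist hp).eq_of_length_add_lt_egirth
    (q.isPath_of_length_eq_dist hq) (by rwa [hp, hq, ← two_mul])
  rw [hpq]

theorem degree_le_degree_of_forall_adj_dist_lt [Fintype V] [DecidableRel G.Adj]
    (hxy : 2 ≤ G.dist x y) (hnbr : ∀ z, G.Adj x z → G.dist z y < G.dist x y)
    (hg : ((2 * G.dist x y : ℕ) : ℕ∞) ≤ G.egirth) : G.degree x ≤ G.degree y := by
  have hreach : G.Reachable x y := Reachable.of_dist_ne_zero (by omega)
  have step : ∀ z, G.Adj x z →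
      ∃ t, G.Adj y t ∧ G.dist z t < G.dist x t ∧ G.dist x t < G.dist x y := by
    intro z hz
    have hzy := hnbr z hz
    have hxzy := hz.reachable.dist_triangle_left y
    rw [dist_eq_one_iff_adj.mpr hz] at hxzy
    obtain ⟨t, hty, hzt⟩ := (hz.symm.reachable.trans hreach).exists_adj_dist_add_one_eq
      (fun h => by rw [h, dist_self] at hxzy; omega)
    have hxtz := hz.reachable.dist_triangle_left t
    have hxty := hty.reachable.dist_triangle_right x
    rw [dist_eq_one_iff_adj.mpr hz] at hxtz
    rw [dist_eq_one_iff_adj.mpr hty] at hxty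
    exact ⟨t, hty.symm, by omega, by omega⟩
  choose f hfy hfz hfx using step
  let F : G.neighborSet x → G.neighborSet y := fun z => ⟨f z z.2, hfy z z.2⟩
  have hF : Function.Injective F := by
    intro z z' h
    have ht : f z z.2 = f z' z'.2 := congrArg Subtype.val h
    refine Subtype.ext (Adj.eq_of_dist_lt_of_two_mul_dist_lt_egirth z.2 z'.2 (hfz z z.2) ?_ ?_)
    · rw [ht]
      exact hfz z' z'.2
    · have := hfx z z.2
      exact hg.trans_lt' (by norm_cast; omega)
  calc G.degree x = Fintype.card (G.neighborSet x) := (card_neighborSet_eq_degree G x).symm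
    _ ≤ Fintype.card (G.neighborSet y) := Fintype.card_le_of_injective F hF
    _ = G.degree y := card_neighborSet_eq_degree G y

theorem natCast_girth_eq_egirth (h : G.girth ≠ 0) : (G.girth : ℕ∞) = G.egirth :=
  ENat.natCast_toNat (egirth_eq_top.not.mpr (girth_eq_zero.not.mp h))

theorem Coloring.even_dist_iff_congr (c : G.Coloring Bool) (h : G.Reachable u v) :
    Even (G.dist u v) ↔ (c u ↔ c v) := by
  obtain ⟨p, hp⟩ := h.exists_walk_length_eq_dist
  rw [← hp]
  exact c.even_length_iff_congr p

theorem Coloring.dist_lt_of_adj_of_dist_eq_diam (c : G.Coloring Bool) (hG : G.ediam ≠ ⊤)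
    (hxy : G.dist x y = G.diam) (hz : G.Adj x z) : G.dist z y < G.dist x y := by
  have hconn := preconnected_of_ediam_ne_top hG
  refine lt_of_le_of_ne (hxy ▸ dist_le_diam hG) fun heq => c.valid hz ?_
  have hx := c.even_dist_iff_congr (hconn x y)
  rw [← heq, c.even_dist_iff_congr (hconn z y)] at hx
  grind

end SimpleGraph

theorem stmt13_general {V : Type*} [Fintype V] (G : SimpleGraph V) [DecidableRel G.Adj]
    (m q r : ℕ) (hm : 3 ≤ m) (hodd : Odd m)
    (c : V → Bool) (hbip : ∀ u v : V, G.Adj u v → c u ≠ c v)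
    (hdiam : G.diam = m)
    (hgirth : G.girth = 2 * m)
    (hq : ∀ v : V, c v = true → G.degree v = q + 1)
    (hr : ∀ v : V, c v = false → G.degree v = r + 1) :
    q = r := by
  let col : G.Coloring Bool := SimpleGraph.Coloring.mk c (hbip _ _)
  have hG : G.ediam ≠ ⊤ := G.ediam_ne_top_of_diam_ne_zero (by omega)
  have hegirth : G.egirth = (2 * m : ℕ) := by
    rw [← hgirth, G.natCast_girth_eq_egirth (by omega)]
  have hdeg : ∀ {x y}, G.dist x y = G.diam → G.degree x ≤ G.degree y := fun hxy =>
    SimpleGraph.degree_le_degree_of_forall_adj_dist_lt (by omega)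
      (fun _ => col.dist_lt_of_adj_of_dist_eq_diam hG hxy) (by rw [hegirth, hxy, hdiam])
  have := G.nontrivial_of_diam_ne_zero (by omega)
  obtain ⟨x, y, hxy⟩ := G.exists_dist_eq_diam
  have hxy_deg : G.degree x = G.degree y :=
    le_antisymm (hdeg hxy) (hdeg (SimpleGraph.dist_comm.trans hxy))
  have hcxy : ¬(col x ↔ col y) := by
    rw [← col.even_dist_iff_congr (G.preconnected_of_ediam_ne_top hG x y), hxy, hdiam]
    exact Nat.not_even_iff_odd.mpr hodd
  change ¬(c x ↔ c y) at hcxy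
  grind

/-- In a finite thick generalised `m`-gon with `m` odd (a connected bipartite graph of
diameter `m` and girth `2m`, all valencies at least `3`), the two thickness parameters are
equal: `q = r`. -/
theorem stmt13 {V : Type*} [Fintype V] (G : SimpleGraph V) [DecidableRel G.Adj]
    (m q r : ℕ) (hm : 3 ≤ m) (hodd : Odd m)
    (c : V → Bool) (hbip : ∀ u v : V, G.Adj u v → c u ≠ c v)
    (hconn : G.Connected)
    (hdiam : G.diam = m)
    (hgirth : G.girth = 2 * m)
    (hthick : ∀ v : V, 3 ≤ G.degree v)
    (hq : ∀ v : V, c v = true → G.degree v = q + 1)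
    (hr : ∀ v : V, c v = false → G.degree v = r + 1) :
    q = r :=
  stmt13_general G m q r hm hodd c hbip hdiam hgirth hq hr
end

section
/- Let q, r > 1 and let c(z₁,z₂) = [(1−q^{-1}z₁^{-1}z₂^{-1})(1−q^{-1}z₁^{-1}z₂)(1−r^{-1}z₁^{-2})(1−r^{-1}z₂^{-2})] / [(1−z₁^{-1}z₂^{-1})(1−z₁^{-1}z₂)(1−z₁^{-2})(1−z₂^{-2})]. Then for t₂ on the unit circle, the function z ↦ 1/c(z^{-1}, t₂^{-1}) extends holomorphically to a neighborhood of the closed unit disc in z (its poles z = q t₂^{±1}, ±√r lie outside), and (1/2πi)∮_{|z|=1} (1/c(z^{-1},t₂^{-1})) dz/z = (1 − t₂²)/(1 − r^{-1}t₂²). -/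
/-!
The denominator factors are `1 - a` with `‖a‖ < 1` on the disc `‖z‖ < min q √r`, so the
integrand is holomorphic on a disc of radius larger than `1`. The integral of `g z / z` is then
`2πi · g 0` by Cauchy's formula, and `g 0` is the stated value.
-/

open Complex Metric

lemma one_sub_ne_zero_of_norm_lt_one {𝕜 : Type*} [SeminormedRing 𝕜] [NormOneClass 𝕜] {a : 𝕜}
    (ha : ‖a‖ < 1) : 1 - a ≠ 0 :=
  sub_ne_zero.2 fun h => by simp [← h] at ha

lemma norm_ofReal_inv_mul_lt_one {x : ℝ} (hx : 0 < x) {w : ℂ} (hw : ‖w‖ < x) :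
    ‖(x : ℂ)⁻¹ * w‖ < 1 := by
  rwa [norm_mul, norm_inv, Complex.norm_of_nonneg hx.le, inv_mul_lt_one₀ hx]

theorem DifferentiableOn.circleIntegral_div_self {ρ : ℝ} (hρ : 0 < ρ) {f : ℂ → ℂ}
    (hf : DifferentiableOn ℂ f (closedBall 0 ρ)) :
    (∮ z in C(0, ρ), f z / z) = 2 * Real.pi * I * f 0 := by
  simpa [div_eq_inv_mul] using hf.circleIntegral_sub_inv_smul (mem_ball_self hρ)

lemma plancherel_denominator_ne_zero {q r : ℝ} (hq : 1 < q) (hr : 1 < r) {t z : ℂ}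
    (ht : ‖t‖ = 1) (hzq : ‖z‖ < q) (hzr : ‖z‖ ^ 2 < r) :
    (1 - (q : ℂ)⁻¹ * z * t) * (1 - (q : ℂ)⁻¹ * z * t⁻¹) *
      (1 - (r : ℂ)⁻¹ * z ^ 2) * (1 - (r : ℂ)⁻¹ * t ^ 2) ≠ 0 := by
  have hq0 : 0 < q := zero_lt_one.trans hq
  have hr0 : 0 < r := zero_lt_one.trans hr
  simp only [mul_assoc (q : ℂ)⁻¹]
  refine mul_ne_zero (mul_ne_zero (mul_ne_zero ?_ ?_) ?_) ?_ <;>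
    apply one_sub_ne_zero_of_norm_lt_one
  · exact norm_ofReal_inv_mul_lt_one hq0 (by rwa [norm_mul, ht, mul_one])
  · exact norm_ofReal_inv_mul_lt_one hq0 (by rwa [norm_mul, norm_inv, ht, inv_one, mul_one])
  · exact norm_ofReal_inv_mul_lt_one hr0 (by rwa [norm_pow])
  · exact norm_ofReal_inv_mul_lt_one hr0 (by rwa [norm_pow, ht, one_pow])

theorem stmt16_general (q r : ℝ) (hq : 1 < q) (hr : 1 < r) (t : ℂ) (ht : ‖t‖ = 1)
    (g : ℂ → ℂ)
    (hg : ∀ z : ℂ, g z =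
      ((1 - z * t) * (1 - z * t⁻¹) * (1 - z ^ 2) * (1 - t ^ 2)) /
      ((1 - (q : ℂ)⁻¹ * z * t) * (1 - (q : ℂ)⁻¹ * z * t⁻¹) *
        (1 - (r : ℂ)⁻¹ * z ^ 2) * (1 - (r : ℂ)⁻¹ * t ^ 2))) :
    (∃ R : ℝ, 1 < R ∧ DifferentiableOn ℂ g (Metric.ball 0 R)) ∧
    (2 * (Real.pi : ℂ) * Complex.I)⁻¹ * (∮ z in C(0, 1), g z / z) =
      (1 - t ^ 2) / (1 - (r : ℂ)⁻¹ * t ^ 2) := by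
  have hR : 1 < min q √r := lt_min hq (Real.lt_sqrt zero_le_one |>.2 (by rwa [one_pow]))
  have hdiff : DifferentiableOn ℂ g (ball 0 (min q √r)) := by
    rw [funext hg]
    intro z hz
    rw [mem_ball_zero_iff, lt_min_iff, Real.lt_sqrt (norm_nonneg z)] at hz
    apply DifferentiableAt.differentiableWithinAt
    apply DifferentiableAt.div (by fun_prop) (by fun_prop)
    exact plancherel_denominator_ne_zero hq hr ht hz.1 hz.2
  refine ⟨⟨_, hR, hdiff⟩, ?_⟩
  rw [(hdiff.mono (closedBall_subset_ball hR)).circleIntegral_div_self one_pos,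
    inv_mul_cancel_left₀ (by simp [Real.pi_ne_zero]), hg 0]
  norm_num

/-- The function `z ↦ 1/c(z⁻¹, t⁻¹)` arising from the `C̃₂` Plancherel measure is
holomorphic on a neighbourhood of the closed unit disc, and its averaged contour integral
over the unit circle equals `(1 - t²)/(1 - r⁻¹t²)`. -/
theorem stmt16 (q r : ℝ) (hq : 1 < q) (hr : 1 < r) (t : ℂ) (ht : ‖t‖ = 1)
    (ht2 : t ^ 2 ≠ 1)
    (g : ℂ → ℂ)
    (hg : ∀ z : ℂ, g z =
      ((1 - z * t) * (1 - z * t⁻¹) * (1 - z ^ 2) * (1 - t ^ 2)) /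
      ((1 - (q : ℂ)⁻¹ * z * t) * (1 - (q : ℂ)⁻¹ * z * t⁻¹) *
        (1 - (r : ℂ)⁻¹ * z ^ 2) * (1 - (r : ℂ)⁻¹ * t ^ 2))) :
    (∃ R : ℝ, 1 < R ∧ DifferentiableOn ℂ g (Metric.ball 0 R)) ∧
    (2 * (Real.pi : ℂ) * Complex.I)⁻¹ * (∮ z in C(0, 1), g z / z) =
      (1 - t ^ 2) / (1 - (r : ℂ)⁻¹ * t ^ 2) :=
  stmt16_general q r hq hr t ht g hg
end
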